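/- Let C > 0 and let W : [0, ∞) → ℝ be a differentiable nonnegative function satisfying W'(t) ≤ -4π + (3/(4(t+C))) · W(t) for all t ≥ 0. Then there exists T > 0 such that this situation cannot persist: more precisely, there is no such W defined on all of [0, ∞). Equivalently, if W is nonnegative and satisfies the differential inequality on [0, T], then T ≤ T₀ for some explicit T₀ depending only on C and W(0). -/
import Mathlib


open Real

/-- There is no nonnegative differentiable `W : [0,∞) → ℝ` satisfying
`W' t ≤ -4π + (3/(4(t+C))) W t` for all `t ≥ 0`. -/
theorem stmt_0 (C : ℝ) (hC : 0 < C) :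
    ¬ ∃ W W' : ℝ → ℝ,
      (∀ t, 0 ≤ t → HasDerivAt W (W' t) t) ∧
      (∀ t, 0 ≤ t → 0 ≤ W t) ∧
      (∀ t, 0 ≤ t → W' t ≤ -4 * π + 3 / (4 * (t + C)) * W t) := by
  rintro ⟨W, W', hd, hW, hineq⟩
  set g : ℝ → ℝ := fun t => W t * (t + C) ^ (-(3/4) : ℝ) + 16 * π * (t + C) ^ ((1/4) : ℝ)
    with hg
  have hpos : ∀ t : ℝ, 0 ≤ t → 0 < t + C := fun t ht => by linarith
  set g' : ℝ → ℝ := fun t =>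
    W' t * (t + C) ^ (-(3/4) : ℝ) + W t * (1 * (-(3/4)) * (t + C) ^ ((-(3/4)) - 1 : ℝ))
      + 16 * π * (1 * (1/4) * (t + C) ^ ((1/4) - 1 : ℝ)) with hg'def
  have hgd : ∀ t, 0 ≤ t → HasDerivAt g (g' t) t := by
    intro t ht
    have hne : t + C ≠ 0 := (hpos t ht).ne'
    have h1 : HasDerivAt (fun t : ℝ => t + C) 1 t := (hasDerivAt_id t).add_const C
    have h2 := (h1.rpow_const (p := (-(3/4) : ℝ)) (Or.inl hne))
    have h3 := (h1.rpow_const (p := ((1/4) : ℝ)) (Or.inl hne))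
    exact ((hd t ht).mul h2).add (h3.const_mul (16 * π))
  have hg'le : ∀ t, 0 ≤ t → g' t ≤ 0 := by
    intro t ht
    have htC := hpos t ht
    have hne : t + C ≠ 0 := htC.ne'
    have hA : (0:ℝ) < (t + C) ^ (-(3/4) : ℝ) := rpow_pos_of_pos htC _
    have e1 : (t + C) ^ ((-(3/4)) - 1 : ℝ) = (t + C) ^ (-(3/4) : ℝ) / (t + C) := by
      rw [Real.rpow_sub htC, Real.rpow_one]
    have e2 : (t + C) ^ ((1/4) - 1 : ℝ) = (t + C) ^ (-(3/4) : ℝ) := by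
      norm_num
    have key : W' t - 3 / (4 * (t + C)) * W t + 4 * π ≤ 0 := by
      have := hineq t ht; linarith
    have : g' t = (t + C) ^ (-(3/4) : ℝ) * (W' t - 3 / (4 * (t + C)) * W t + 4 * π) := by
      rw [hg'def]
      simp only [e1, e2]
      field_simp
      ring
    rw [this]
    exact mul_nonpos_of_nonneg_of_nonpos hA.le key
  have hanti : AntitoneOn g (Set.Ici (0:ℝ)) := by
    apply antitoneOn_of_deriv_nonpos (convex_Ici 0)
    · intro t ht
      exact (hgd t ht).continuousAt.continuousWithinAt
    · intro t ht
      rw [interior_Ici] at ht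
      exact (hgd t (le_of_lt ht)).differentiableAt.differentiableWithinAt
    · intro t ht
      rw [interior_Ici] at ht
      rw [(hgd t (le_of_lt ht)).deriv]
      exact hg'le t (le_of_lt ht)
  -- g 0 > 0
  have hπ : (0:ℝ) < π := Real.pi_pos
  have hg0pos : 0 < g 0 := by
    have h1 : 0 ≤ W 0 * (0 + C) ^ (-(3/4) : ℝ) :=
      mul_nonneg (hW 0 le_rfl) (rpow_pos_of_pos (by linarith) _).le
    have h2 : 0 < 16 * π * (0 + C) ^ ((1/4) : ℝ) := by
      have := rpow_pos_of_pos (show (0:ℝ) < 0 + C by linarith) ((1/4) : ℝ)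
      positivity
    simp only [hg]; linarith
  set a : ℝ := g 0 / (16 * π) with ha
  have hapos : 0 < a := div_pos hg0pos (by positivity)
  set T : ℝ := a ^ 4 with hT
  have hTnn : 0 ≤ T := by positivity
  have hgT : g T ≤ g 0 := hanti (Set.self_mem_Ici) hTnn hTnn
  have hlb : 16 * π * (T + C) ^ ((1/4) : ℝ) ≤ g T := by
    have h1 : 0 ≤ W T * (T + C) ^ (-(3/4) : ℝ) :=
      mul_nonneg (hW T hTnn) (rpow_pos_of_pos (hpos T hTnn) _).le
    simp only [hg]; linarith
  have hTrt : T ^ ((1/4) : ℝ) = a := by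
    rw [hT, ← Real.rpow_natCast a 4, ← Real.rpow_mul hapos.le]
    norm_num
  have hstrict : a < (T + C) ^ ((1/4) : ℝ) := by
    rw [← hTrt]
    exact Real.rpow_lt_rpow hTnn (by linarith) (by norm_num)
  have hea : 16 * π * a = g 0 := by rw [ha]; field_simp
  have hmul : 16 * π * a < 16 * π * (T + C) ^ ((1/4) : ℝ) :=
    mul_lt_mul_of_pos_left hstrict (by positivity)
  have hfin := hmul.trans_le (hlb.trans hgT)
  rw [hea] at hfin
  exact lt_irrefl _ hfin
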